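/- arXiv:2406.10748 — 6 statements merged into one kernel-verified Lean document; each statement's English description precedes it below -/
import Mathlib

section
/- Let n = 4m and h : ZMod n → {1, -1} satisfy ∑_j h(j) h(j - s) = 0 for all s ≠ 0. Let B₂ be the number of 2-blocks of h (maximal cyclic constant runs of length exactly 2) and let α₁ be the number of maximal alternating sequences of consecutive 1-blocks (a 1-alternating sequence is a maximal run of consecutive blocks all of size 1). Then B₂ + α₁ = m. -/
open Finset
open scoped Classical

/-- `h` is a `±1` vector. -/
def signRow (n : ℕ) (h : ZMod n → ℤ) : Prop := ∀ j, h j = 1 ∨ h j = -1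

/-- All nontrivial circular autocorrelations of `h` vanish: `h` is the defining
row of a circulant Hadamard matrix. -/
def hadamardRow (n : ℕ) [NeZero n] (h : ZMod n → ℤ) : Prop :=
  ∀ s : ZMod n, s ≠ 0 → ∑ j : ZMod n, h j * h (j - s) = 0

/-- `j` is the first index of a maximal (cyclic) constant block of `h`. -/
def isStart (n : ℕ) (h : ZMod n → ℤ) (j : ZMod n) : Prop := h j ≠ h (j - 1)

/-- The length of the maximal constant run of `h` beginning at `j`. -/
noncomputable def blockLen (n : ℕ) (h : ZMod n → ℤ) (j : ZMod n) : ℕ :=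
  sInf {k : ℕ | 0 < k ∧ h (j + (k : ZMod n)) ≠ h j}

/-- `j` is (the position of) a block of size exactly 1. -/
def oneBlock (n : ℕ) (h : ZMod n → ℤ) (j : ZMod n) : Prop :=
  h j ≠ h (j - 1) ∧ h j ≠ h (j + 1)

/-- `j` starts a block of size exactly 2. -/
def twoBlock (n : ℕ) (h : ZMod n → ℤ) (j : ZMod n) : Prop :=
  h j ≠ h (j - 1) ∧ h j = h (j + 1) ∧ h (j + 1) ≠ h (j + 2)

/-- `j` starts a block of size at least 3. -/
def bigBlock (n : ℕ) (h : ZMod n → ℤ) (j : ZMod n) : Prop :=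
  h j ≠ h (j - 1) ∧ h j = h (j + 1) ∧ h (j + 1) = h (j + 2)

/-- The block ending at `j - 1` has size exactly 2. -/
def prevTwo (n : ℕ) (h : ZMod n → ℤ) (j : ZMod n) : Prop :=
  h (j - 1) = h (j - 2) ∧ h (j - 2) ≠ h (j - 3)

/-- The block ending at `j - 1` has size at least 3. -/
def prevBig (n : ℕ) (h : ZMod n → ℤ) (j : ZMod n) : Prop :=
  h (j - 1) = h (j - 2) ∧ h (j - 2) = h (j - 3)

/-- `j` is the first 1-block of a maximal run of consecutive 1-blocks
(a `1`-alternating sequence). -/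
def oneRunStart (n : ℕ) (h : ZMod n → ℤ) (j : ZMod n) : Prop :=
  oneBlock n h j ∧ ¬ oneBlock n h (j - 1)

/-- `j` starts the first 2-block of a maximal run of consecutive 2-blocks
(a `2`-alternating sequence). -/
def twoRunStart (n : ℕ) (h : ZMod n → ℤ) (j : ZMod n) : Prop :=
  twoBlock n h j ∧ ¬ twoBlock n h (j - 2)

/-- `j` starts the first block of a maximal run of consecutive blocks of size `≥ 3`. -/
def bigRunStart (n : ℕ) (h : ZMod n → ℤ) (j : ZMod n) : Prop :=
  bigBlock n h j ∧ ¬ prevBig n h j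

/-- The number `α₁` of maximal runs of consecutive 1-blocks. -/
noncomputable def alpha1 (n : ℕ) [NeZero n] (h : ZMod n → ℤ) : ℕ :=
  (Finset.univ.filter fun j => oneRunStart n h j).card

/-- The length (number of 1-blocks) of the maximal run of 1-blocks starting at `j`. -/
noncomputable def oneRunLen (n : ℕ) (h : ZMod n → ℤ) (j : ZMod n) : ℕ :=
  sInf {l : ℕ | 0 < l ∧ ¬ oneBlock n h (j + (l : ZMod n))}

/-- The length (number of 2-blocks) of the maximal run of 2-blocks starting at `j`. -/
noncomputable def twoRunLen (n : ℕ) (h : ZMod n → ℤ) (j : ZMod n) : ℕ :=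
  sInf {l : ℕ | 0 < l ∧ ¬ twoBlock n h (j + ((2 * l : ℕ) : ZMod n))}


section Helpers
variable {n : ℕ} [NeZero n]

private lemma sumShift (c : ZMod n) (f : ZMod n → ℤ) :
    ∑ j : ZMod n, f (j + c) = ∑ j, f j :=
  Equiv.sum_comp (Equiv.addRight c) f

private lemma cardInd (p : ZMod n → Prop) :
    ((Finset.univ.filter p).card : ℤ) = ∑ j : ZMod n, if p j then (1:ℤ) else 0 := by
  rw [Finset.card_filter]; push_cast; rfl

private lemma indSplit (A B : Prop) :
    (if A then (1:ℤ) else 0) = (if A ∧ ¬ B then 1 else 0) + (if A ∧ B then 1 else 0) := by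
  by_cases hA : A <;> by_cases hB : B <;> simp [hA, hB]

end Helpers

theorem stmt2 (n m : ℕ) [NeZero n] (h : ZMod n → ℤ)
    (hn : n = 4 * m) (hm : 1 ≤ m)
    (hsign : signRow n h) (hH : hadamardRow n h) :
    (Finset.univ.filter fun j : ZMod n => twoBlock n h j).card + alpha1 n h = m := by
  have hn4 : 4 ≤ n := by omega
  have ne1 : (1 : ZMod n) ≠ 0 := by
    intro e
    have h2 : ((1:ℕ) : ZMod n) = 0 := by exact_mod_cast e
    have := Nat.le_of_dvd (by norm_num) ((ZMod.natCast_eq_zero_iff 1 n).mp h2)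
    omega
  have ne2 : (2 : ZMod n) ≠ 0 := by
    intro e
    have h2 : ((2:ℕ) : ZMod n) = 0 := by exact_mod_cast e
    have := Nat.le_of_dvd (by norm_num) ((ZMod.natCast_eq_zero_iff 2 n).mp h2)
    omega
  have ne3 : (3 : ZMod n) ≠ 0 := by
    intro e
    have h2 : ((3:ℕ) : ZMod n) = 0 := by exact_mod_cast e
    have := Nat.le_of_dvd (by norm_num) ((ZMod.natCast_eq_zero_iff 3 n).mp h2)
    omega
  -- index normalizations
  have i1 : ∀ a : ZMod n, a + 1 - 1 = a := fun a => by ring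
  have i2 : ∀ a : ZMod n, a + 2 - 1 = a + 1 := fun a => by ring
  have i3 : ∀ a : ZMod n, a + 2 - 2 = a := fun a => by ring
  have i4 : ∀ a : ZMod n, a + 1 + 1 = a + 2 := fun a => by ring
  set x : ZMod n → ℤ := fun j => if h j = h (j - 1) then 0 else 1 with hxdef
  have hsq : ∀ j, h j * h j = 1 := fun j => by rcases hsign j with e | e <;> rw [e] <;> norm_num
  have key : ∀ j, h j * h (j - 1) = 1 - 2 * x j := by
    intro j
    rcases hsign j with e1 | e1 <;> rcases hsign (j-1) with e2 | e2 <;>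
      simp only [hxdef, e1, e2] <;> norm_num
  have key2 : ∀ j, h j * h (j - 2) = (1 - 2 * x j) * (1 - 2 * x (j - 1)) := by
    intro j
    rw [← key j, ← key (j - 1), show j - 1 - 1 = j - 2 from by ring]
    linear_combination (-(h j * h (j - 2))) * hsq (j - 1)
  have key3 : ∀ j, h j * h (j - 3) =
      (1 - 2 * x j) * ((1 - 2 * x (j - 1)) * (1 - 2 * x (j - 2))) := by
    intro j
    rw [← key j, ← key (j - 1), ← key (j - 2), show j - 1 - 1 = j - 2 from by ring,
      show j - 2 - 1 = j - 3 from by ring]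
    linear_combination (-(h j * h (j - 3)) * (h (j - 2) * h (j - 2))) * hsq (j - 1) +
      (-(h j * h (j - 3))) * hsq (j - 2)
  have cardZ : ∑ _j : ZMod n, (1:ℤ) = 4 * (m:ℤ) := by
    rw [Finset.sum_const, Finset.card_univ, ZMod.card, hn]
    push_cast; ring
  -- shifted sums
  have s_a : ∑ j : ZMod n, x (j - 1) = ∑ j, x j := by
    have hs := sumShift (1 : ZMod n) (fun j => x (j - 1))
    simp only [i1] at hs
    exact hs.symm
  have s_a2 : ∑ j : ZMod n, x (j - 2) = ∑ j, x j := by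
    have hs := sumShift (2 : ZMod n) (fun j => x (j - 2))
    simp only [i3] at hs
    exact hs.symm
  have conv1 : ∑ j : ZMod n, x j * x (j - 1) = ∑ j, x j * x (j + 1) := by
    have hs := sumShift (1 : ZMod n) (fun j => x j * x (j - 1))
    simp only [i1] at hs
    rw [← hs]
    exact Finset.sum_congr rfl fun j _ => mul_comm _ _
  have convP2 : ∑ j : ZMod n, x (j - 1) * x (j - 2) = ∑ j, x j * x (j + 1) := by
    have hs := sumShift (2 : ZMod n) (fun j => x (j - 1) * x (j - 2))
    simp only [i2, i3] at hs
    rw [← hs]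
    exact Finset.sum_congr rfl fun j _ => mul_comm _ _
  have convQ : ∑ j : ZMod n, x j * x (j - 2) = ∑ j, x j * x (j + 2) := by
    have hs := sumShift (2 : ZMod n) (fun j => x j * x (j - 2))
    simp only [i3] at hs
    rw [← hs]
    exact Finset.sum_congr rfl fun j _ => mul_comm _ _
  have convT : ∑ j : ZMod n, x j * (x (j - 1) * x (j - 2)) = ∑ j, x j * (x (j + 1) * x (j + 2)) := by
    have hs := sumShift (2 : ZMod n) (fun j => x j * (x (j - 1) * x (j - 2)))
    simp only [i2, i3] at hs
    rw [← hs]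
    exact Finset.sum_congr rfl fun j _ => by ring
  -- shift 1
  have E1 : ∑ j : ZMod n, ((1:ℤ) - 2 * x j) = 0 := by
    rw [← hH 1 ne1]
    exact Finset.sum_congr rfl fun j _ => (key j).symm
  rw [Finset.sum_sub_distrib, ← Finset.mul_sum, cardZ] at E1
  have eq1 : ∑ j : ZMod n, x j = 2 * (m:ℤ) := by linarith
  -- shift 2
  have E2 : ∑ j : ZMod n, ((1:ℤ) - 2 * x j - 2 * x (j - 1) + 4 * (x j * x (j - 1))) = 0 := by
    rw [← hH 2 ne2]
    refine Finset.sum_congr rfl fun j _ => ?_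
    rw [key2 j]; ring
  have distrib2 : ∑ j : ZMod n, ((1:ℤ) - 2 * x j - 2 * x (j - 1) + 4 * (x j * x (j - 1)))
      = (∑ _j : ZMod n, (1:ℤ)) - 2 * (∑ j : ZMod n, x j) - 2 * (∑ j : ZMod n, x (j - 1))
        + 4 * (∑ j : ZMod n, x j * x (j - 1)) := by
    simp only [Finset.sum_add_distrib, Finset.sum_sub_distrib, Finset.mul_sum]
  rw [distrib2, cardZ, s_a, conv1, eq1] at E2
  have eq2 : ∑ j : ZMod n, x j * x (j + 1) = (m:ℤ) := by linarith
  -- shift 3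
  have E3 : ∑ j : ZMod n, ((1:ℤ) - 2 * x j - 2 * x (j - 1) - 2 * x (j - 2)
      + 4 * (x j * x (j - 1)) + 4 * (x j * x (j - 2)) + 4 * (x (j - 1) * x (j - 2))
      - 8 * (x j * (x (j - 1) * x (j - 2)))) = 0 := by
    rw [← hH 3 ne3]
    refine Finset.sum_congr rfl fun j _ => ?_
    rw [key3 j]; ring
  have distrib3 : ∑ j : ZMod n, ((1:ℤ) - 2 * x j - 2 * x (j - 1) - 2 * x (j - 2)
      + 4 * (x j * x (j - 1)) + 4 * (x j * x (j - 2)) + 4 * (x (j - 1) * x (j - 2))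
      - 8 * (x j * (x (j - 1) * x (j - 2))))
      = (∑ _j : ZMod n, (1:ℤ)) - 2 * (∑ j : ZMod n, x j) - 2 * (∑ j : ZMod n, x (j - 1))
        - 2 * (∑ j : ZMod n, x (j - 2))
        + 4 * (∑ j : ZMod n, x j * x (j - 1)) + 4 * (∑ j : ZMod n, x j * x (j - 2))
        + 4 * (∑ j : ZMod n, x (j - 1) * x (j - 2))
        - 8 * (∑ j : ZMod n, x j * (x (j - 1) * x (j - 2))) := by
    simp only [Finset.sum_add_distrib, Finset.sum_sub_distrib, Finset.mul_sum]
  rw [distrib3, cardZ, s_a, s_a2, conv1, convP2, convQ, convT, eq1, eq2] at E3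
  have eq3 : ∑ j : ZMod n, x j * x (j + 2) = 2 * ∑ j : ZMod n, x j * (x (j + 1) * x (j + 2)) := by
    linarith
  -- cardinalities
  have cardOne : ((Finset.univ.filter fun j : ZMod n => oneBlock n h j).card : ℤ)
      = ∑ j : ZMod n, x j * x (j + 1) := by
    rw [cardInd]
    refine Finset.sum_congr rfl fun j _ => ?_
    rcases hsign (j-1) with e0 | e0 <;> rcases hsign j with e1 | e1 <;>
      rcases hsign (j+1) with e2 | e2 <;>
      simp only [hxdef, oneBlock, i1, e0, e1, e2] <;> norm_num
  have cardTwo : ((Finset.univ.filter fun j : ZMod n => twoBlock n h j).card : ℤ)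
      = ∑ j : ZMod n, x j * x (j + 2) - ∑ j : ZMod n, x j * (x (j + 1) * x (j + 2)) := by
    rw [cardInd, ← Finset.sum_sub_distrib]
    refine Finset.sum_congr rfl fun j _ => ?_
    rcases hsign (j-1) with e0 | e0 <;> rcases hsign j with e1 | e1 <;>
      rcases hsign (j+1) with e2 | e2 <;> rcases hsign (j+2) with e3 | e3 <;>
      simp only [hxdef, twoBlock, i1, i2, e0, e1, e2, e3] <;> norm_num
  have cardPair : (∑ j : ZMod n, if oneBlock n h j ∧ oneBlock n h (j - 1) then (1:ℤ) else 0)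
      = ∑ j : ZMod n, x j * (x (j + 1) * x (j + 2)) := by
    have hs := sumShift (1 : ZMod n) (fun j => if oneBlock n h j ∧ oneBlock n h (j - 1) then (1:ℤ) else 0)
    simp only [i1] at hs
    rw [← hs]
    refine Finset.sum_congr rfl fun j _ => ?_
    rcases hsign (j-1) with e0 | e0 <;> rcases hsign j with e1 | e1 <;>
      rcases hsign (j+1) with e2 | e2 <;> rcases hsign (j+2) with e3 | e3 <;>
      simp only [hxdef, oneBlock, i1, i2, i4, e0, e1, e2, e3] <;> norm_num
  have cardSplit : ((Finset.univ.filter fun j : ZMod n => oneBlock n h j).card : ℤ)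
      = ((Finset.univ.filter fun j : ZMod n => oneRunStart n h j).card : ℤ)
        + ∑ j : ZMod n, x j * (x (j + 1) * x (j + 2)) := by
    rw [cardInd, cardInd, ← cardPair, ← Finset.sum_add_distrib]
    refine Finset.sum_congr rfl fun j _ => ?_
    rw [indSplit (oneBlock n h j) (oneBlock n h (j - 1))]
    simp [oneRunStart]
    congr
  -- conclusion
  have goalZ : (((Finset.univ.filter fun j : ZMod n => twoBlock n h j).card : ℤ)
      + ((Finset.univ.filter fun j : ZMod n => oneRunStart n h j).card : ℤ)) = (m:ℤ) := by
    have := cardOne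
    rw [cardSplit] at this
    linarith [eq2, eq3, cardTwo]
  unfold alpha1
  exact_mod_cast goalZ
end

section
/- Let n = 4m and h : ZMod n → {1, -1} satisfy ∑_j h(j) h(j - s) = 0 for all s ≠ 0. Let α₁, α₂, α_{≥3} be the numbers of maximal runs of consecutive blocks all of size 1, all of size 2, and all of size ≥ 3 respectively, and let α_{2,≥3} be the number of adjacent pairs of blocks (B, B') with {|B|, |B'|} consisting of one block of size 2 and one of size ≥ 3. Then α₁ + α_{2,≥3} = α₂ + α_{≥3}. -/
open Finset
open scoped Classical

private lemma stmt3_pointwise (n : ℕ) (h : ZMod n → ℤ) (j : ZMod n) :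
    ((if oneRunStart n h j then 1 else 0)
      + (if (bigBlock n h j ∧ prevTwo n h j) ∨ (twoBlock n h j ∧ prevBig n h j)
          then 1 else 0)
      + (if oneBlock n h (j - 1) then 1 else 0) : ℕ)
    = (if twoRunStart n h j then 1 else 0)
      + (if bigRunStart n h j then 1 else 0)
      + (if oneBlock n h j then 1 else 0) := by
  have r1 : j - 1 - 1 = j - 2 := by ring
  have r2 : j - 1 + 1 = j := by ring
  have r3 : j - 2 - 1 = j - 3 := by ring
  have r4 : j - 2 + 1 = j - 1 := by ring
  have r5 : j - 2 + 2 = j := by ring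
  simp only [oneRunStart, twoRunStart, bigRunStart, oneBlock, twoBlock, bigBlock,
    prevTwo, prevBig, r1, r2, r3, r4, r5]
  by_cases e1 : h (j - 2) = h (j - 3) <;> by_cases e2 : h (j - 1) = h (j - 2) <;>
    by_cases e3 : h j = h (j - 1) <;> by_cases e4 : h j = h (j + 1) <;>
    by_cases e5 : h (j + 1) = h (j + 2) <;> simp_all <;>
    first | omega | (split_ifs <;> omega)

theorem stmt3 (n m : ℕ) [NeZero n] (h : ZMod n → ℤ)
    (hn : n = 4 * m) (hm : 1 ≤ m)
    (hsign : signRow n h) (hH : hadamardRow n h) :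
    alpha1 n h +
      (Finset.univ.filter fun j : ZMod n =>
        (bigBlock n h j ∧ prevTwo n h j) ∨ (twoBlock n h j ∧ prevBig n h j)).card =
    (Finset.univ.filter fun j : ZMod n => twoRunStart n h j).card +
      (Finset.univ.filter fun j : ZMod n => bigRunStart n h j).card := by
  classical
  have hsum : ∑ j : ZMod n,
      ((if oneRunStart n h j then 1 else 0)
        + (if (bigBlock n h j ∧ prevTwo n h j) ∨ (twoBlock n h j ∧ prevBig n h j)
            then 1 else 0)
        + (if oneBlock n h (j - 1) then 1 else 0) : ℕ)
      = ∑ j : ZMod n,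
      ((if twoRunStart n h j then 1 else 0)
        + (if bigRunStart n h j then 1 else 0)
        + (if oneBlock n h j then 1 else 0) : ℕ) :=
    Finset.sum_congr rfl fun j _ => stmt3_pointwise n h j
  have hshift : ∑ j : ZMod n, (if oneBlock n h (j - 1) then (1 : ℕ) else 0)
      = ∑ j : ZMod n, (if oneBlock n h j then (1 : ℕ) else 0) :=
    Fintype.sum_equiv (Equiv.subRight (1 : ZMod n)) _ _ (fun j => rfl)
  simp only [Finset.sum_add_distrib, hshift] at hsum
  have c1 : (Finset.univ.filter fun j : ZMod n => oneRunStart n h j).card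
      = ∑ j : ZMod n, (if oneRunStart n h j then (1 : ℕ) else 0) :=
    Finset.card_filter _ _
  have c2 : (Finset.univ.filter fun j : ZMod n =>
        (bigBlock n h j ∧ prevTwo n h j) ∨ (twoBlock n h j ∧ prevBig n h j)).card
      = ∑ j : ZMod n, (if (bigBlock n h j ∧ prevTwo n h j) ∨
          (twoBlock n h j ∧ prevBig n h j) then (1 : ℕ) else 0) :=
    Finset.card_filter _ _
  have c3 : (Finset.univ.filter fun j : ZMod n => twoRunStart n h j).card
      = ∑ j : ZMod n, (if twoRunStart n h j then (1 : ℕ) else 0) :=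
    Finset.card_filter _ _
  have c4 : (Finset.univ.filter fun j : ZMod n => bigRunStart n h j).card
      = ∑ j : ZMod n, (if bigRunStart n h j then (1 : ℕ) else 0) :=
    Finset.card_filter _ _
  rw [alpha1, c1, c2, c3, c4]
  omega
end

section
/- There is no circulant Hadamard matrix of order n = 4m, m > 1, whose defining row consists of m blocks of size 1 alternating with m blocks of size 3 (i.e. α₁ = m, every maximal run of 1-blocks has length 1, and all other blocks have size 3). Concretely: if h : ZMod n → {1, -1} has block structure alternating 1-blocks and 3-blocks, then ∑_j h(j) h(j - 4) ≠ 0. -/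
open Finset
open scoped Classical

set_option linter.unusedSectionVars false

section aux
variable {n : ℕ} [NeZero n] {h : ZMod n → ℤ}

lemma sign_ne_iff (hsign : signRow n h) (a b : ZMod n) :
    h a ≠ h b ↔ h a = - h b := by
  rcases hsign a with ha | ha <;> rcases hsign b with hb | hb <;>
    rw [ha, hb] <;> norm_num

lemma S_nonempty {s : ZMod n} (hs : isStart n h s) (j : ZMod n) :
    {k : ℕ | 0 < k ∧ h (j + (k : ZMod n)) ≠ h j}.Nonempty := by
  by_cases hj : h j = h s
  · have hne : s - 1 - j ≠ 0 := by
      intro h0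
      have e : s - 1 = j := by rw [sub_eq_zero] at h0; exact h0
      exact hs (by rw [e, hj])
    refine ⟨(s - 1 - j).val, ZMod.val_pos.mpr hne, ?_⟩
    have e : j + (((s - 1 - j).val : ℕ) : ZMod n) = s - 1 := by
      rw [ZMod.natCast_val, ZMod.cast_id]; ring
    rw [e, hj]
    exact fun e' => hs e'.symm
  · have hne : s - j ≠ 0 := by
      intro h0
      exact hj (by rw [sub_eq_zero] at h0; rw [h0])
    refine ⟨(s - j).val, ZMod.val_pos.mpr hne, ?_⟩
    have e : j + (((s - j).val : ℕ) : ZMod n) = s := by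
      rw [ZMod.natCast_val, ZMod.cast_id]; ring
    rw [e]
    exact fun e' => hj e'.symm

lemma blockLen_pos_ne (hex : ∃ s, isStart n h s) (j : ZMod n) :
    0 < blockLen n h j ∧ h (j + (blockLen n h j : ZMod n)) ≠ h j := by
  obtain ⟨s, hs⟩ := hex
  exact Nat.sInf_mem (S_nonempty hs j)

lemma blockLen_const (j : ZMod n) {i : ℕ} (h0 : 0 < i) (hi : i < blockLen n h j) :
    h (j + (i : ZMod n)) = h j := by
  by_contra hne
  have hmem : i ∈ {k : ℕ | 0 < k ∧ h (j + (k : ZMod n)) ≠ h j} := ⟨h0, hne⟩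
  have := Nat.sInf_le hmem
  unfold blockLen at hi
  omega

lemma next_start (hex : ∃ s, isStart n h s)
    (hsizes : ∀ j : ZMod n, isStart n h j → blockLen n h j = 1 ∨ blockLen n h j = 3)
    (j : ZMod n) (hj : isStart n h j) :
    isStart n h (j + (blockLen n h j : ZMod n)) := by
  have hne := (blockLen_pos_ne hex j).2
  rcases hsizes j hj with hL | hL <;> rw [hL] at hne ⊢
  · show h (j + ((1:ℕ):ZMod n)) ≠ h (j + ((1:ℕ):ZMod n) - 1)
    have e : j + ((1:ℕ):ZMod n) - 1 = j := by push_cast; ring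
    rw [e]; exact hne
  · show h (j + ((3:ℕ):ZMod n)) ≠ h (j + ((3:ℕ):ZMod n) - 1)
    have e2 : h (j + ((2:ℕ):ZMod n)) = h j := blockLen_const j (by norm_num) (by omega)
    have e : j + ((3:ℕ):ZMod n) - 1 = j + ((2:ℕ):ZMod n) := by push_cast; ring
    rw [e, e2]; exact hne

lemma step (hsign : signRow n h) (hex : ∃ s, isStart n h s)
    (hsizes : ∀ j : ZMod n, isStart n h j → blockLen n h j = 1 ∨ blockLen n h j = 3)
    (halt : ∀ j : ZMod n, isStart n h j →
      blockLen n h (j + (blockLen n h j : ZMod n)) ≠ blockLen n h j)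
    (j : ZMod n) (hj : isStart n h j) :
    isStart n h (j + 4) ∧ blockLen n h (j + 4) = blockLen n h j ∧ h (j + 4) = h j := by
  have hne := (blockLen_pos_ne hex j).2
  have hnext := next_start hex hsizes j hj
  have hhalt := halt j hj
  rcases hsizes j hj with hL | hL <;> rw [hL] at hne hnext hhalt
  · -- block of length 1 at j, then length-3 block at j+1
    have c1 : ((1:ℕ):ZMod n) = 1 := by push_cast; ring
    rw [c1] at hnext hhalt hne
    have hL2 : blockLen n h (j + 1) = 3 := by
      rcases hsizes (j+1) hnext with e | e
      · exact absurd e hhalt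
      · exact e
    have hne2 := (blockLen_pos_ne hex (j+1)).2
    rw [hL2] at hne2
    have e3 : j + 1 + ((3:ℕ):ZMod n) = j + 4 := by push_cast; ring
    rw [e3] at hne2
    have hc2 : h (j + 1 + ((2:ℕ):ZMod n)) = h (j+1) :=
      blockLen_const (j+1) (by norm_num) (by rw [hL2]; norm_num)
    have e2 : j + 1 + ((2:ℕ):ZMod n) = j + 3 := by push_cast; ring
    rw [e2] at hc2
    have hstart4 : isStart n h (j + 4) := by
      show h (j+4) ≠ h (j + 4 - 1)
      have e : j + 4 - 1 = j + 3 := by ring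
      rw [e, hc2]; exact hne2
    have hnext2 := next_start hex hsizes (j+1) hnext
    rw [hL2] at hnext2
    have hhalt2 := halt (j+1) hnext
    rw [hL2, e3] at hhalt2
    have hL4 : blockLen n h (j + 4) = 1 := by
      rcases hsizes (j+4) hstart4 with e | e
      · exact e
      · exact absurd e hhalt2
    refine ⟨hstart4, by rw [hL4, hL], ?_⟩
    have v1 : h (j + 1) = - h j := (sign_ne_iff hsign _ _).mp hne
    have v4 : h (j + 4) = - h (j + 1) := (sign_ne_iff hsign _ _).mp hne2
    rw [v4, v1]; ring
  · -- block of length 3 at j, then length-1 block at j+3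
    have c3 : j + ((3:ℕ):ZMod n) = j + 3 := by push_cast; ring
    rw [c3] at hnext hhalt hne
    have hL2 : blockLen n h (j + 3) = 1 := by
      rcases hsizes (j+3) hnext with e | e
      · exact e
      · exact absurd e hhalt
    have hne2 := (blockLen_pos_ne hex (j+3)).2
    rw [hL2] at hne2
    have e4 : j + 3 + ((1:ℕ):ZMod n) = j + 4 := by push_cast; ring
    rw [e4] at hne2
    have hstart4 : isStart n h (j + 4) := by
      show h (j+4) ≠ h (j + 4 - 1)
      have e : j + 4 - 1 = j + 3 := by ring
      rw [e]; exact hne2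
    have hnext2 := next_start hex hsizes (j+3) hnext
    rw [hL2, e4] at hnext2
    have hhalt2 := halt (j+3) hnext
    rw [hL2, e4] at hhalt2
    have hL4 : blockLen n h (j + 4) = 3 := by
      rcases hsizes (j+4) hstart4 with e | e
      · exact absurd e hhalt2
      · exact e
    refine ⟨hstart4, by rw [hL4, hL], ?_⟩
    have v1 : h (j + 3) = - h j := (sign_ne_iff hsign _ _).mp hne
    have v4 : h (j + 4) = - h (j + 3) := (sign_ne_iff hsign _ _).mp hne2
    rw [v4, v1]; ring

lemma cover (hex : ∃ s, isStart n h s)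
    (hsizes : ∀ j : ZMod n, isStart n h j → blockLen n h j = 1 ∨ blockLen n h j = 3)
    (x : ZMod n) :
    ∃ (s : ZMod n) (d : ℕ), isStart n h s ∧ d < blockLen n h s ∧ x = s + (d : ZMod n) := by
  obtain ⟨s0, hs0⟩ := hex
  have hTne : {d : ℕ | isStart n h (x - (d : ZMod n))}.Nonempty := by
    refine ⟨(x - s0).val, ?_⟩
    show isStart n h (x - (((x - s0).val : ℕ) : ZMod n))
    have e : x - (((x - s0).val : ℕ) : ZMod n) = s0 := by
      rw [ZMod.natCast_val, ZMod.cast_id]; ring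
    rw [e]; exact hs0
  set D := sInf {d : ℕ | isStart n h (x - (d : ZMod n))} with hD
  have hDmem : isStart n h (x - (D : ZMod n)) := Nat.sInf_mem hTne
  set s := x - (D : ZMod n) with hsdef
  have hlt : D < blockLen n h s := by
    by_contra hge
    push_neg at hge
    have hLpos := (blockLen_pos_ne ⟨s0, hs0⟩ s).1
    set L := blockLen n h s with hLdef
    have hns := next_start ⟨s0, hs0⟩ hsizes s hDmem
    have hmem : (D - L) ∈ {d : ℕ | isStart n h (x - (d : ZMod n))} := by
      show isStart n h (x - ((D - L : ℕ) : ZMod n))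
      have e : x - ((D - L : ℕ) : ZMod n) = s + (L : ZMod n) := by
        rw [Nat.cast_sub hge, hsdef]; ring
      rw [e]; exact hns
    have := Nat.sInf_le hmem
    omega
  exact ⟨s, D, hDmem, hlt, by rw [hsdef]; ring⟩

lemma period4 (hsign : signRow n h)
    (hsizes : ∀ j : ZMod n, isStart n h j → blockLen n h j = 1 ∨ blockLen n h j = 3)
    (halt : ∀ j : ZMod n, isStart n h j →
      blockLen n h (j + (blockLen n h j : ZMod n)) ≠ blockLen n h j)
    (x : ZMod n) : h (x + 4) = h x := by
  by_cases hex : ∃ s, isStart n h s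
  · obtain ⟨s, d, hs, hd, hx⟩ := cover hex hsizes x
    obtain ⟨hs4, hL4, hv4⟩ := step hsign hex hsizes halt s hs
    have hxv : h x = h s := by
      rcases Nat.eq_zero_or_pos d with h0 | h0
      · rw [hx, h0]; norm_num
      · rw [hx]; exact blockLen_const s h0 hd
    have hx4 : x + 4 = s + 4 + (d : ZMod n) := by rw [hx]; ring
    have hx4v : h (x + 4) = h (s + 4) := by
      rcases Nat.eq_zero_or_pos d with h0 | h0
      · rw [hx4, h0]; norm_num
      · rw [hx4]; exact blockLen_const (s+4) h0 (by rw [hL4]; exact hd)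
    rw [hx4v, hv4, hxv]
  · push_neg at hex
    have e : ∀ y : ZMod n, h y = h (y - 1) := by
      intro y
      by_contra hne
      exact hex y hne
    calc h (x + 4) = h (x + 4 - 1) := e _
      _ = h (x + 3) := by ring_nf
      _ = h (x + 3 - 1) := e _
      _ = h (x + 2) := by ring_nf
      _ = h (x + 2 - 1) := e _
      _ = h (x + 1) := by ring_nf
      _ = h (x + 1 - 1) := e _
      _ = h x := by ring_nf

end aux

theorem stmt5 (n m : ℕ) [NeZero n] (h : ZMod n → ℤ)
    (hn : n = 4 * m) (hm : 1 < m)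
    (hsign : signRow n h)
    (hsizes : ∀ j : ZMod n, isStart n h j → blockLen n h j = 1 ∨ blockLen n h j = 3)
    (halt : ∀ j : ZMod n, isStart n h j →
      blockLen n h (j + (blockLen n h j : ZMod n)) ≠ blockLen n h j) :
    ∑ j : ZMod n, h j * h (j - 4) ≠ 0 := by
  have hper := period4 hsign hsizes halt
  have key : ∀ j : ZMod n, h j * h (j - 4) = 1 := by
    intro j
    have hp := hper (j - 4)
    have e : j - 4 + 4 = j := by ring
    rw [e] at hp
    rw [hp]
    rcases hsign (j - 4) with hv | hv <;> rw [hv] <;> norm_num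
  rw [Finset.sum_congr rfl (fun j _ => key j)]
  have hcard : ∑ _j : ZMod n, (1 : ℤ) = (n : ℤ) := by
    simp [Finset.card_univ, ZMod.card]
  rw [hcard]
  intro h0
  have : n = 0 := by exact_mod_cast h0
  omega
end

section
/- There is no circulant Hadamard matrix of order n = 4m with m > 1 whose defining row has exactly m − 1 maximal runs of consecutive size-1 blocks (α₁ = m − 1). -/
open Finset
open scoped Classical

namespace CHM

def w : ℕ → ℕ → ℕ
  | 0, _ => 0
  | k+1, y => y % 2 + w k (y / 2)

def pc8 (z : ℕ) : ℕ :=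
  let p1 := (z &&& 0x55) + ((z >>> 1) &&& 0x55)
  let p2 := (p1 &&& 0x33) + ((p1 >>> 2) &&& 0x33)
  (p2 + (p2 >>> 4)) &&& 0x0F

def rotc (s x : ℕ) : ℕ := (x >>> s) ||| ((x % 2^s) <<< (16 - s))

def chk (x s : ℕ) : Bool :=
  let y := x ^^^ rotc s x
  (pc8 (y % 256) + pc8 (y >>> 8)) == 8

def good (x : ℕ) : Bool :=
  !(chk x 1 && chk x 2 && chk x 3 && chk x 4 && chk x 5 && chk x 8)

def allPow : ℕ → ℕ → (ℕ → Bool) → Bool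
  | lo, 0, f => f lo
  | lo, k+1, f => allPow lo k f && allPow (lo + 2^k) k f

def enc : List Bool → ℕ
  | [] => 0
  | a :: l => a.toNat + 2 * enc l

set_option maxHeartbeats 10000000 in
theorem KEY : allPow 0 15 good = true := by decide

theorem allPow_spec (f : ℕ → Bool) : ∀ (k lo : ℕ), allPow lo k f = true →
    ∀ i, i < 2^k → f (lo + i) = true := by
  intro k
  induction k with
  | zero => intro lo hall i hi
            interval_cases i
            · simpa [allPow] using hall
  | succ k ih =>
      intro lo hall i hi
      rw [allPow, Bool.and_eq_true] at hall
      by_cases hc : i < 2^k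
      · exact ih lo hall.1 i hc
      · have h2 : i - 2^k < 2^k := by
          have := Nat.pow_succ 2 k ▸ hi
          omega
        have := ih (lo + 2^k) hall.2 (i - 2^k) h2
        have harr : lo + 2^k + (i - 2^k) = lo + i := by omega
        rwa [harr] at this

theorem w_add (a b y : ℕ) : w (a + b) y = w a y + w b (y / 2^a) := by
  induction a generalizing y with
  | zero => simp [w]
  | succ a ih =>
      have h4 : a + 1 + b = (a + b) + 1 := by omega
      rw [h4, w, ih (y/2), w]
      have h3 : y / 2 / 2^a = y / 2^(a+1) := by
        rw [Nat.div_div_eq_div_mul, pow_succ, mul_comm]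
      rw [h3]
      omega

theorem w_mod (k y : ℕ) : w k (y % 2^k) = w k y := by
  induction k generalizing y with
  | zero => simp [w]
  | succ k ih =>
      rw [w, w]
      have h1 : y % 2^(k+1) % 2 = y % 2 := by
        rw [Nat.mod_mod_of_dvd]
        exact Dvd.intro_left (2^k) (by rw [pow_succ])
      have h2 : y % 2^(k+1) / 2 = (y / 2) % 2^k := by
        rw [pow_succ, mul_comm, Nat.mod_mul_right_div_self]
      rw [h1, h2, ih]

theorem pc8_spec : ∀ y, y < 256 → pc8 y = w 8 y := by
  have : allPow 0 8 (fun y => pc8 y == w 8 y) = true := by decide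
  intro y hy
  have := allPow_spec _ 8 0 this y (by simpa using hy)
  simpa using this

theorem chk_iff (x s : ℕ) (hx : x < 2^16) (hs : s ≤ 16) :
    chk x s = true ↔ w 16 (x ^^^ rotc s x) = 8 := by
  have hy : x ^^^ rotc s x < 2^16 := by
    apply Nat.xor_lt_two_pow hx
    apply Nat.or_lt_two_pow
    · calc x >>> s ≤ x := by rw [Nat.shiftRight_eq_div_pow]; exact Nat.div_le_self _ _
           _ < 2^16 := hx
    · rw [Nat.shiftLeft_eq]
      calc (x % 2^s) * 2^(16-s) < 2^s * 2^(16-s) := by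
            apply Nat.mul_lt_mul_of_lt_of_le (Nat.mod_lt _ (Nat.pow_pos (by norm_num))) le_rfl
            exact Nat.pow_pos (by norm_num)
        _ = 2^16 := by rw [← pow_add]; congr 1; omega
  set y := x ^^^ rotc s x with hydef
  have h1 : y % 256 < 256 := Nat.mod_lt _ (by norm_num)
  have h2 : y >>> 8 < 256 := by
    rw [Nat.shiftRight_eq_div_pow]
    have : y < 256 * 256 := by norm_num at hy ⊢; omega
    omega
  unfold chk
  rw [← hydef]
  simp only [beq_iff_eq]
  rw [pc8_spec _ h1, pc8_spec _ h2]
  have h3 : w 16 y = w 8 y + w 8 (y / 2^8) := w_add 8 8 y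
  rw [h3]
  have h4 : w 8 (y % 256) = w 8 y := by
    have := w_mod 8 y
    norm_num at this
    rw [this]
  rw [h4, Nat.shiftRight_eq_div_pow]

theorem w_card (k : ℕ) : ∀ y : ℕ, w k y = ((Finset.range k).filter (fun i => y.testBit i = true)).card := by
  induction k with
  | zero => intro y; simp [w]
  | succ k ih =>
      intro y
      rw [w, ih (y/2), Finset.card_filter, Finset.card_filter, Finset.sum_range_succ']
      have h0 : ∀ i, (if (y/2).testBit i = true then 1 else 0) = (if y.testBit (i+1) = true then 1 else 0) := by
        intro i; rw [Nat.testBit_succ]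
      simp only [h0]
      have h1 : (if y.testBit 0 = true then 1 else 0) = y % 2 := by
        rw [Nat.testBit_zero]
        rcases Nat.mod_two_eq_zero_or_one y with h | h <;> simp [h]
      omega

theorem rot_testBit (s x j : ℕ) (hs1 : 0 < s) (hs : s < 16) (hx : x < 2^16) (hj : j < 16) :
    (rotc s x).testBit j = x.testBit ((j + s) % 16) := by
  unfold rotc
  rw [Nat.testBit_or, Nat.testBit_shiftRight, Nat.testBit_shiftLeft, Nat.testBit_mod_two_pow]
  by_cases hc : j + s < 16
  · have h1 : ¬ (j ≥ 16 - s) := by omega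
    have h2 : (j + s) % 16 = j + s := Nat.mod_eq_of_lt hc
    simp [h1, h2, Nat.add_comm s j]
  · have h1 : j ≥ 16 - s := by omega
    have h2 : (j + s) % 16 = j + s - 16 := by
      have : j + s - 16 < 16 := by omega
      omega
    have h3 : x.testBit (s + j) = false := by
      apply Nat.testBit_lt_two_pow
      calc x < 2^16 := hx
        _ ≤ 2^(s+j) := Nat.pow_le_pow_right (by norm_num) (by omega)
    have h4 : j - (16 - s) = j + s - 16 := by omega
    have h5 : j + s - 16 < s := by omega
    simp [h1, h2, h3, h4, h5]

theorem enc_lt : ∀ l : List Bool, enc l < 2^l.length := by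
  intro l
  induction l with
  | nil => simp [enc]
  | cons a l ih =>
      rw [enc, List.length_cons, pow_succ]
      rcases a <;> simp [Bool.toNat] <;> omega

theorem enc_testBit : ∀ (l : List Bool) (j : ℕ), (enc l).testBit j = l.getD j false := by
  intro l
  induction l with
  | nil => intro j; simp [enc, Nat.testBit, List.getD]
  | cons a l ih =>
      intro j
      rcases j with _ | j
      · rw [Nat.testBit_zero, enc]
        rcases a <;> simp [Bool.toNat]
      · rw [Nat.testBit_succ, enc]
        have : (a.toNat + 2 * enc l) / 2 = enc l := by rcases a <;> simp [Bool.toNat] <;> omega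
        rw [this, ih j]
        simp [List.getD]

lemma sum_shift {n : ℕ} [NeZero n] (f : ZMod n → ℤ) (c : ZMod n) :
    ∑ j : ZMod n, f (j + c) = ∑ j : ZMod n, f j :=
  Fintype.sum_equiv (Equiv.addRight c) _ _ (fun _ => rfl)

lemma corr_add {n : ℕ} [NeZero n] {h : ZMod n → ℤ} (hH : hadamardRow n h) (s : ZMod n)
    (hs : s ≠ 0) : ∑ j : ZMod n, h j * h (j + s) = 0 := by
  have := hH (-s) (neg_ne_zero.mpr hs)
  simpa [sub_neg_eq_add] using this

lemma card_pm {n : ℕ} [NeZero n] (f : ZMod n → ℤ) (hpm : ∀ j, f j = 1 ∨ f j = -1) :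
    2 * (((Finset.univ.filter (fun j => f j = 1)).card : ℤ)) = n + ∑ j : ZMod n, f j := by
  have key : ∀ j : ZMod n, f j = 2 * (if f j = 1 then (1:ℤ) else 0) - 1 := by
    intro j; rcases hpm j with hj | hj <;> rw [hj] <;> norm_num
  rw [Finset.sum_congr rfl (fun j _ => key j), Finset.sum_sub_distrib, ← Finset.mul_sum,
    Finset.sum_boole, Finset.sum_const, Finset.card_univ, ZMod.card]
  push_cast
  ring

lemma pm_mul {a b : ℤ} (ha : a = 1 ∨ a = -1) (hb : b = 1 ∨ b = -1) :
    a * b = 1 ∨ a * b = -1 := by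
  rcases ha with h|h <;> rcases hb with h'|h' <;> rw [h, h'] <;> norm_num

lemma pm_mul_eq_one {a b : ℤ} (ha : a = 1 ∨ a = -1) (hb : b = 1 ∨ b = -1) :
    a * b = 1 ↔ a = b := by
  rcases ha with h|h <;> rcases hb with h'|h' <;> rw [h, h'] <;> norm_num

lemma pm_xor {a b : ℤ} (ha : a = 1 ∨ a = -1) (hb : b = 1 ∨ b = -1) :
    (xor (decide (a = 1)) (decide (b = 1))) = decide (¬ (a = b)) := by
  rcases ha with rfl|rfl <;> rcases hb with rfl|rfl <;> norm_num

lemma zmod_card (p : ℕ → Prop) [DecidablePred p] :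
    ((Finset.range 16).filter p).card
      = (Finset.univ.filter (fun j : ZMod 16 => p (ZMod.val j))).card := by
  refine Finset.card_bij' (fun i _ => (i : ZMod 16)) (fun j _ => ZMod.val j) ?_ ?_ ?_ ?_
  · intro i hi
    rw [Finset.mem_filter, Finset.mem_range] at hi
    rw [Finset.mem_filter]
    refine ⟨Finset.mem_univ _, ?_⟩
    rw [ZMod.val_cast_of_lt hi.1]
    exact hi.2
  · intro j hj
    rw [Finset.mem_filter] at hj
    rw [Finset.mem_filter, Finset.mem_range]
    exact ⟨ZMod.val_lt j, hj.2⟩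
  · intro i hi
    rw [Finset.mem_filter, Finset.mem_range] at hi
    exact ZMod.val_cast_of_lt hi.1
  · intro j _
    simp only [ZMod.natCast_val, ZMod.cast_id]

lemma no16' (g : ZMod 16 → ℤ) (hsg : signRow 16 g) (hHg : hadamardRow 16 g)
    (h15 : g 15 = -1) : False := by
  classical
  set d : ℕ → Bool := fun i => decide (g (i : ZMod 16) = 1) with hd
  set x : ℕ := enc [d 0, d 1, d 2, d 3, d 4, d 5, d 6, d 7, d 8, d 9, d 10, d 11, d 12, d 13, d 14] with hx
  have hxlt : x < 2^15 := by
    rw [hx]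
    have hencl := enc_lt [d 0, d 1, d 2, d 3, d 4, d 5, d 6, d 7, d 8, d 9, d 10, d 11, d 12, d 13, d 14]
    have hlen : ([d 0, d 1, d 2, d 3, d 4, d 5, d 6, d 7, d 8, d 9, d 10, d 11, d 12, d 13, d 14] : List Bool).length = 15 := rfl
    rwa [hlen] at hencl
  have hx16 : x < 2^16 := lt_trans hxlt (by norm_num)
  have hd15 : d 15 = false := by
    rw [hd]
    simp only [decide_eq_false_iff_not]
    intro hcon
    rw [show ((15 : ℕ) : ZMod 16) = (15 : ZMod 16) by norm_num] at hcon
    rw [h15] at hcon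
    norm_num at hcon
  have hbit : ∀ j, j < 16 → x.testBit j = d j := by
    intro j hj
    rw [hx, enc_testBit]
    interval_cases j
    · rfl
    · rfl
    · rfl
    · rfl
    · rfl
    · rfl
    · rfl
    · rfl
    · rfl
    · rfl
    · rfl
    · rfl
    · rfl
    · rfl
    · rfl
    · simp [List.getD, hd15]
  -- cardinality of disagreement sets
  have hcnt : ∀ s : ℕ, ((s : ZMod 16) ≠ 0) →
      (Finset.univ.filter (fun j : ZMod 16 => ¬ (g j = g (j + (s : ZMod 16))))).card = 8 := by
    intro s hs
    have hsum := corr_add hHg _ hs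
    have hpm : ∀ j : ZMod 16, g j * g (j + (s : ZMod 16)) = 1
        ∨ g j * g (j + (s : ZMod 16)) = -1 := fun j => pm_mul (hsg j) (hsg _)
    have hc := card_pm _ hpm
    rw [hsum] at hc
    have h8 : (Finset.univ.filter (fun j : ZMod 16 => g j * g (j + (s : ZMod 16)) = 1)).card = 8 := by
      have : ((Finset.univ.filter (fun j : ZMod 16 => g j * g (j + (s : ZMod 16)) = 1)).card : ℤ) = 8 := by
        norm_num at hc
        linarith
      exact_mod_cast this
    have hfilter : (Finset.univ.filter (fun j : ZMod 16 => ¬ (g j = g (j + (s : ZMod 16)))))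
        = (Finset.univ.filter (fun j : ZMod 16 => ¬ (g j * g (j + (s : ZMod 16)) = 1))) := by
      apply Finset.filter_congr
      intro j _
      exact not_congr (pm_mul_eq_one (hsg j) (hsg _)).symm
    rw [hfilter]
    have hneg := Finset.card_filter_add_card_filter_not
      (s := (Finset.univ : Finset (ZMod 16)))
      (p := fun j : ZMod 16 => g j * g (j + (s : ZMod 16)) = 1)
    rw [Finset.card_univ, ZMod.card] at hneg
    omega
  -- w values
  have hw : ∀ s : ℕ, 0 < s → s < 16 → w 16 (x ^^^ rotc s x) = 8 := by
    intro s hs0 hs16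
    have hsz : (s : ZMod 16) ≠ 0 := by
      intro h0
      rw [ZMod.natCast_eq_zero_iff] at h0
      have := Nat.le_of_dvd hs0 h0
      omega
    have hcnt8 := hcnt s hsz
    rw [w_card]
    have hpt : ∀ i, i < 16 → ((x ^^^ rotc s x).testBit i = true
        ↔ ¬ (g (i : ZMod 16) = g ((i : ZMod 16) + (s : ZMod 16)))) := by
      intro i hi
      rw [Nat.testBit_xor, rot_testBit s x i hs0 hs16 hx16 hi, hbit i hi,
        hbit ((i + s) % 16) (Nat.mod_lt _ (by norm_num))]
      rw [hd]
      simp only []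
      rw [pm_xor (hsg _) (hsg _)]
      have hcast : (((i + s) % 16 : ℕ) : ZMod 16) = (i : ZMod 16) + (s : ZMod 16) := by
        rw [ZMod.natCast_mod, Nat.cast_add]
      rw [hcast]
      exact decide_eq_true_iff
    have heq1 : ((Finset.range 16).filter (fun i => (x ^^^ rotc s x).testBit i = true))
        = ((Finset.range 16).filter
            (fun i : ℕ => ¬ (g (i : ZMod 16) = g ((i : ZMod 16) + (s : ZMod 16))))) := by
      apply Finset.filter_congr
      intro i hi
      rw [Finset.mem_range] at hi
      exact hpt i hi
    rw [heq1, zmod_card (fun i : ℕ => ¬ (g (i : ZMod 16) = g ((i : ZMod 16) + (s : ZMod 16))))]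
    have heq2 : (Finset.univ.filter
          (fun j : ZMod 16 => ¬ (g ((ZMod.val j : ℕ) : ZMod 16)
            = g (((ZMod.val j : ℕ) : ZMod 16) + (s : ZMod 16)))))
        = (Finset.univ.filter (fun j : ZMod 16 => ¬ (g j = g (j + (s : ZMod 16))))) := by
      apply Finset.filter_congr
      intro j _
      rw [ZMod.natCast_val, ZMod.cast_id]
    rw [heq2, hcnt8]
  -- the six checks
  have hc1 : chk x 1 = true := (chk_iff x 1 hx16 (by norm_num)).mpr (hw 1 (by norm_num) (by norm_num))
  have hc2 : chk x 2 = true := (chk_iff x 2 hx16 (by norm_num)).mpr (hw 2 (by norm_num) (by norm_num))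
  have hc3 : chk x 3 = true := (chk_iff x 3 hx16 (by norm_num)).mpr (hw 3 (by norm_num) (by norm_num))
  have hc4 : chk x 4 = true := (chk_iff x 4 hx16 (by norm_num)).mpr (hw 4 (by norm_num) (by norm_num))
  have hc5 : chk x 5 = true := (chk_iff x 5 hx16 (by norm_num)).mpr (hw 5 (by norm_num) (by norm_num))
  have hc8 : chk x 8 = true := (chk_iff x 8 hx16 (by norm_num)).mpr (hw 8 (by norm_num) (by norm_num))
  have hgood : good x = true := by
    have := allPow_spec good 15 0 KEY x hxlt
    rwa [Nat.zero_add] at this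
  rw [good, hc1, hc2, hc3, hc4, hc5, hc8] at hgood
  simp at hgood

lemma no16 (h : ZMod 16 → ℤ) (hsign : signRow 16 h) (hH : hadamardRow 16 h) : False := by
  rcases hsign 15 with h15 | h15
  · refine no16' (fun j => - h j) ?_ ?_ ?_
    · intro j
      show -h j = 1 ∨ -h j = -1
      rcases hsign j with e | e <;> rw [e] <;> norm_num
    · intro s hs
      have := hH s hs
      simpa [neg_mul_neg] using this
    · simp [h15]
  · exact no16' h hsign hH h15

end CHM

set_option maxHeartbeats 2000000 in
theorem stmt6 (n m : ℕ) [NeZero n] (h : ZMod n → ℤ)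
    (hn : n = 4 * m) (hm : 1 < m)
    (hsign : signRow n h) (hH : hadamardRow n h)
    (halpha : alpha1 n h = m - 1) : False := by
  have hn8 : 8 ≤ n := by omega
  have hsz : ∀ s : ℕ, 0 < s → s < 8 → ((s : ZMod n) ≠ 0) := by
    intro s hs1 hs2 h0
    rw [ZMod.natCast_eq_zero_iff] at h0
    have := Nat.le_of_dvd hs1 h0
    omega
  have C : ∀ s : ℕ, 0 < s → s < 8 → ∑ j : ZMod n, h j * h (j + (s : ZMod n)) = 0 :=
    fun s a b => CHM.corr_add hH _ (hsz s a b)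
  -- expansion of alpha1
  have expand : ∑ j : ZMod n, (if oneRunStart n h j then (8:ℤ) else 0)
      = ∑ j : ZMod n, (1 - h j * h (j+1) - h (j-1) * h j + h (j-2) * h (j-1)
          + h (j-1) * h (j+1) - h (j-2) * h (j-1) * h j * h (j+1)
          - h (j-2) * h j + h (j-2) * h (j+1)) := by
    apply Finset.sum_congr rfl
    intro j _
    have r1 : j - 1 - 1 = j - 2 := by ring
    have r2 : j - 1 + 1 = j := by ring
    rcases hsign (j-2) with e2 | e2 <;> rcases hsign (j-1) with e1 | e1 <;>
      rcases hsign j with e0 | e0 <;> rcases hsign (j+1) with ep | ep <;>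
      simp only [oneRunStart, oneBlock, r1, r2, e2, e1, e0, ep] <;> norm_num
  have lhs_eq : ∑ j : ZMod n, (if oneRunStart n h j then (8:ℤ) else 0) = 8 * (alpha1 n h : ℤ) := by
    have pt : ∀ j : ZMod n, (if oneRunStart n h j then (8:ℤ) else 0)
        = 8 * (if oneRunStart n h j then (1:ℤ) else 0) := by
      intro j; split_ifs <;> ring
    rw [Finset.sum_congr rfl (fun j _ => pt j), ← Finset.mul_sum, Finset.sum_boole]
    rfl
  -- the eight pieces
  have S1 : ∑ j : ZMod n, h j * h (j+1) = 0 := by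
    have := C 1 (by norm_num) (by norm_num); rwa [Nat.cast_one] at this
  have S2 : ∑ j : ZMod n, h (j-1) * h j = 0 := by
    rw [← S1, ← CHM.sum_shift (fun j => h j * h (j+1)) (-1)]
    apply Finset.sum_congr rfl; intro j _
    have i1 : j + -1 = j - 1 := by ring
    have i2 : j - 1 + 1 = j := by ring
    simp only [i1, i2]
  have S3 : ∑ j : ZMod n, h (j-2) * h (j-1) = 0 := by
    rw [← S1, ← CHM.sum_shift (fun j => h j * h (j+1)) (-2)]
    apply Finset.sum_congr rfl; intro j _
    have i1 : j + -2 = j - 2 := by ring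
    have i2 : j - 2 + 1 = j - 1 := by ring
    simp only [i1, i2]
  have C2 : ∑ j : ZMod n, h j * h (j+2) = 0 := by
    have := C 2 (by norm_num) (by norm_num)
    rwa [Nat.cast_ofNat] at this
  have C3 : ∑ j : ZMod n, h j * h (j+3) = 0 := by
    have := C 3 (by norm_num) (by norm_num)
    rwa [Nat.cast_ofNat] at this
  have C4 : ∑ j : ZMod n, h j * h (j+4) = 0 := by
    have := C 4 (by norm_num) (by norm_num)
    rwa [Nat.cast_ofNat] at this
  have S4 : ∑ j : ZMod n, h (j-1) * h (j+1) = 0 := by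
    rw [← C2, ← CHM.sum_shift (fun j => h j * h (j+2)) (-1)]
    apply Finset.sum_congr rfl; intro j _
    have i1 : j + -1 = j - 1 := by ring
    have i2 : j - 1 + 2 = j + 1 := by ring
    simp only [i1, i2]
  have S6 : ∑ j : ZMod n, h (j-2) * h j = 0 := by
    rw [← C2, ← CHM.sum_shift (fun j => h j * h (j+2)) (-2)]
    apply Finset.sum_congr rfl; intro j _
    have i1 : j + -2 = j - 2 := by ring
    have i2 : j - 2 + 2 = j := by ring
    simp only [i1, i2]
  have S7 : ∑ j : ZMod n, h (j-2) * h (j+1) = 0 := by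
    rw [← C3, ← CHM.sum_shift (fun j => h j * h (j+3)) (-2)]
    apply Finset.sum_congr rfl; intro j _
    have i1 : j + -2 = j - 2 := by ring
    have i2 : j - 2 + 3 = j + 1 := by ring
    simp only [i1, i2]
  have S5 : ∑ j : ZMod n, h (j-2) * h (j-1) * h j * h (j+1)
      = ∑ j : ZMod n, h j * h (j+1) * h (j+2) * h (j+3) := by
    rw [← CHM.sum_shift (fun j => h j * h (j+1) * h (j+2) * h (j+3)) (-2)]
    apply Finset.sum_congr rfl; intro j _
    have i1 : j + -2 = j - 2 := by ring
    have i2 : j - 2 + 1 = j - 1 := by ring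
    have i3 : j - 2 + 2 = j := by ring
    have i4 : j - 2 + 3 = j + 1 := by ring
    simp only [i1, i2, i3, i4]
  -- compute Y
  have hYval : ∑ j : ZMod n, h j * h (j+1) * h (j+2) * h (j+3) = 8 - 4 * (m : ℤ) := by
    have split : ∑ j : ZMod n, (1 - h j * h (j+1) - h (j-1) * h j + h (j-2) * h (j-1)
          + h (j-1) * h (j+1) - h (j-2) * h (j-1) * h j * h (j+1)
          - h (j-2) * h j + h (j-2) * h (j+1))
        = (n : ℤ) - (∑ j : ZMod n, h j * h (j+1)) - (∑ j : ZMod n, h (j-1) * h j)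
          + (∑ j : ZMod n, h (j-2) * h (j-1)) + (∑ j : ZMod n, h (j-1) * h (j+1))
          - (∑ j : ZMod n, h (j-2) * h (j-1) * h j * h (j+1))
          - (∑ j : ZMod n, h (j-2) * h j) + (∑ j : ZMod n, h (j-2) * h (j+1)) := by
      simp only [Finset.sum_add_distrib, Finset.sum_sub_distrib, Finset.sum_const,
        Finset.card_univ, ZMod.card, nsmul_eq_mul, mul_one]
    have halpha' : (alpha1 n h : ℤ) = (m : ℤ) - 1 := by
      rw [halpha]; push_cast [Nat.cast_sub (by omega : 1 ≤ m)]; ring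
    have := expand
    rw [lhs_eq, split, S1, S2, S3, S4, S6, S7, S5, halpha'] at this
    have hnz : (n : ℤ) = 4 * (m : ℤ) := by rw [hn]; push_cast; ring
    rw [hnz] at this
    linarith
  -- |D| = 4
  have htpm : ∀ j : ZMod n, h j * h (j+1) * h (j+2) * h (j+3) = 1
      ∨ h j * h (j+1) * h (j+2) * h (j+3) = -1 := by
    intro j
    exact CHM.pm_mul (CHM.pm_mul (CHM.pm_mul (hsign j) (hsign (j+1))) (hsign (j+2))) (hsign (j+3))
  have hDcard : ((Finset.univ.filter
      (fun j : ZMod n => h j * h (j+1) * h (j+2) * h (j+3) = 1)).card : ℤ) = 4 := by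
    have := CHM.card_pm _ htpm
    rw [hYval] at this
    have hnz : (n : ℤ) = 4 * (m : ℤ) := by rw [hn]; push_cast; ring
    rw [hnz] at this
    linarith
  -- T j * T (j+1) = h j * h (j+4)
  have hTT : ∀ j : ZMod n, (h j * h (j+1) * h (j+2) * h (j+3))
      * (h (j+1) * h (j+1+1) * h (j+1+2) * h (j+1+3)) = h j * h (j+4) := by
    intro j
    have i1 : j + 1 + 1 = j + 2 := by ring
    have i2 : j + 1 + 2 = j + 3 := by ring
    have i3 : j + 1 + 3 = j + 4 := by ring
    rw [i1, i2, i3]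
    rcases hsign (j+1) with e1 | e1 <;> rcases hsign (j+2) with e2 | e2 <;>
      rcases hsign (j+3) with e3 | e3 <;> rw [e1, e2, e3] <;> ring
  have hFsum : ∑ j : ZMod n, (h j * h (j+1) * h (j+2) * h (j+3))
      * (h (j+1) * h (j+1+1) * h (j+1+2) * h (j+1+3)) = 0 := by
    rw [Finset.sum_congr rfl (fun j _ => hTT j)]
    exact C4
  have hFpm : ∀ j : ZMod n, (h j * h (j+1) * h (j+2) * h (j+3))
      * (h (j+1) * h (j+1+1) * h (j+1+2) * h (j+1+3)) = 1
      ∨ (h j * h (j+1) * h (j+2) * h (j+3))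
      * (h (j+1) * h (j+1+1) * h (j+1+2) * h (j+1+3)) = -1 := by
    intro j
    exact CHM.pm_mul (htpm j) (CHM.pm_mul (CHM.pm_mul (CHM.pm_mul (hsign (j+1)) (hsign (j+1+1)))
      (hsign (j+1+2))) (hsign (j+1+3)))
  have hFcard : ((Finset.univ.filter (fun j : ZMod n => (h j * h (j+1) * h (j+2) * h (j+3))
      * (h (j+1) * h (j+1+1) * h (j+1+2) * h (j+1+3)) = 1)).card : ℤ) = 2 * m := by
    have := CHM.card_pm _ hFpm
    rw [hFsum] at this
    have hnz : (n : ℤ) = 4 * (m : ℤ) := by rw [hn]; push_cast; ring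
    rw [hnz] at this
    linarith
  -- the disagreement set A
  have hsub : (Finset.univ.filter (fun j : ZMod n => ¬ ((h j * h (j+1) * h (j+2) * h (j+3))
        * (h (j+1) * h (j+1+1) * h (j+1+2) * h (j+1+3)) = 1)))
      ⊆ (Finset.univ.filter
          (fun j : ZMod n => h j * h (j+1) * h (j+2) * h (j+3) = 1))
        ∪ (Finset.univ.filter
          (fun j : ZMod n => h (j+1) * h (j+1+1) * h (j+1+2) * h (j+1+3) = 1)) := by
    intro j hj
    rw [Finset.mem_filter] at hj
    rw [Finset.mem_union, Finset.mem_filter, Finset.mem_filter]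
    have hprod := hj.2
    have ha := htpm j
    have hb : h (j+1) * h (j+1+1) * h (j+1+2) * h (j+1+3) = 1
        ∨ h (j+1) * h (j+1+1) * h (j+1+2) * h (j+1+3) = -1 :=
      CHM.pm_mul (CHM.pm_mul (CHM.pm_mul (hsign (j+1)) (hsign (j+1+1))) (hsign (j+1+2))) (hsign (j+1+3))
    rcases ha with ha | ha
    · exact Or.inl ⟨Finset.mem_univ j, ha⟩
    · rcases hb with hb | hb
      · exact Or.inr ⟨Finset.mem_univ j, hb⟩
      · exfalso; apply hprod; rw [ha, hb]; norm_num
  have hshiftcard : (Finset.univ.filter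
        (fun j : ZMod n => h (j+1) * h (j+1+1) * h (j+1+2) * h (j+1+3) = 1)).card
      = (Finset.univ.filter
        (fun j : ZMod n => h j * h (j+1) * h (j+2) * h (j+3) = 1)).card := by
    refine Finset.card_bij' (fun a _ => a + 1) (fun a _ => a - 1) ?_ ?_ ?_ ?_
    · intro a ha
      rw [Finset.mem_filter] at ha ⊢
      exact ⟨Finset.mem_univ _, ha.2⟩
    · intro a ha
      rw [Finset.mem_filter] at ha ⊢
      refine ⟨Finset.mem_univ _, ?_⟩
      have i1 : a - 1 + 1 = a := by ring
      have i2 : a - 1 + 1 + 1 = a + 1 := by ring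
      have i3 : a - 1 + 1 + 2 = a + 2 := by ring
      have i4 : a - 1 + 1 + 3 = a + 3 := by ring
      rw [i4, i3, i2, i1]
      exact ha.2
    · intro a _; ring
    · intro a _; ring
  have hcompl : ((Finset.univ.filter (fun j : ZMod n => ¬ ((h j * h (j+1) * h (j+2) * h (j+3))
        * (h (j+1) * h (j+1+1) * h (j+1+2) * h (j+1+3)) = 1))).card : ℤ) = 2 * m := by
    have h1 := Finset.card_filter_add_card_filter_not
      (s := (Finset.univ : Finset (ZMod n)))
      (p := fun j : ZMod n => (h j * h (j+1) * h (j+2) * h (j+3))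
        * (h (j+1) * h (j+1+1) * h (j+1+2) * h (j+1+3)) = 1)
    rw [Finset.card_univ, ZMod.card] at h1
    have h2 : ((Finset.univ.filter (fun j : ZMod n => (h j * h (j+1) * h (j+2) * h (j+3))
        * (h (j+1) * h (j+1+1) * h (j+1+2) * h (j+1+3)) = 1)).card : ℤ) = 2 * m := hFcard
    have h3 : (n : ℤ) = 4 * m := by rw [hn]; push_cast; ring
    omega
  have h2m : 2 * (m : ℤ) ≤ 8 := by
    have hle := Finset.card_le_card hsub
    have hun := Finset.card_union_le
      (Finset.univ.filter (fun j : ZMod n => h j * h (j+1) * h (j+2) * h (j+3) = 1))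
      (Finset.univ.filter (fun j : ZMod n => h (j+1) * h (j+1+1) * h (j+1+2) * h (j+1+3) = 1))
    rw [hshiftcard] at hun
    have := le_trans hle hun
    omega
  -- sum of all correlations = square of row sum
  have hSS : (∑ j : ZMod n, h j) * (∑ j : ZMod n, h j) = (n : ℤ) := by
    have swap : ∑ s : ZMod n, ∑ j : ZMod n, h j * h (j - s)
        = ∑ j : ZMod n, ∑ s : ZMod n, h j * h (j - s) := Finset.sum_comm
    have inner : ∀ j : ZMod n, ∑ s : ZMod n, h j * h (j - s) = h j * ∑ k : ZMod n, h k := by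
      intro j
      rw [← Finset.mul_sum]
      congr 1
      exact Fintype.sum_equiv (Equiv.subLeft j) _ _ (fun _ => rfl)
    have single : ∑ s : ZMod n, ∑ j : ZMod n, h j * h (j - s)
        = ∑ j : ZMod n, h j * h (j - 0) := by
      apply Finset.sum_eq_single_of_mem 0 (Finset.mem_univ 0)
      intro b _ hb
      exact hH b hb
    have diag : ∑ j : ZMod n, h j * h (j - 0) = (n : ℤ) := by
      have : ∀ j : ZMod n, h j * h (j - 0) = 1 := by
        intro j
        rw [sub_zero]
        rcases hsign j with e | e <;> rw [e] <;> norm_num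
      rw [Finset.sum_congr rfl (fun j _ => this j), Finset.sum_const, Finset.card_univ, ZMod.card,
        nsmul_eq_mul, mul_one]
    calc (∑ j : ZMod n, h j) * (∑ j : ZMod n, h j)
        = ∑ j : ZMod n, h j * ∑ k : ZMod n, h k := by rw [← Finset.sum_mul]
      _ = ∑ j : ZMod n, ∑ s : ZMod n, h j * h (j - s) := by
          exact Finset.sum_congr rfl (fun j _ => (inner j).symm)
      _ = ∑ s : ZMod n, ∑ j : ZMod n, h j * h (j - s) := swap.symm
      _ = ∑ j : ZMod n, h j * h (j - 0) := single
      _ = (n : ℤ) := diag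
  -- m = 4
  have hm4 : m = 4 := by
    have hmle : m ≤ 4 := by omega
    interval_cases m
    · -- m = 2
      exfalso
      have hnz : (n : ℤ) = 8 := by rw [hn]; norm_num
      rw [hnz] at hSS
      set S := ∑ j : ZMod n, h j with hS
      have b1 : S ≤ 2 := by nlinarith
      have b2 : -2 ≤ S := by nlinarith
      interval_cases S <;> omega
    · -- m = 3
      exfalso
      have hnz : (n : ℤ) = 12 := by rw [hn]; norm_num
      rw [hnz] at hSS
      set S := ∑ j : ZMod n, h j with hS
      have b1 : S ≤ 3 := by nlinarith
      have b2 : -3 ≤ S := by nlinarith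
      interval_cases S <;> omega
    · rfl
  have hn16 : n = 16 := by omega
  subst hn16
  exact CHM.no16 h hsign hH
end

section
/- Let h : ZMod n → {1, -1}, n = 4m, be the defining row of a circulant Hadamard matrix. Then the number of blocks of size ≥ 2 equals m, and ∑_{B : |B| ≥ 2} |B| = 3m. -/
open Finset
open scoped Classical

section Helpers

variable {n : ℕ} [NeZero n] {h : ZMod n → ℤ}

lemma CH_sign_mul (hsign : signRow n h) (j k : ZMod n) :
    h j * h k = if h j = h k then 1 else -1 := by
  rcases hsign j with hj | hj <;> rcases hsign k with hk | hk <;>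
    simp [hj, hk] <;> norm_num

lemma CH_start_indicator (hsign : signRow n h) (j : ZMod n) :
    h j * h (j - 1) = 1 - 2 * (if isStart n h j then (1 : ℤ) else 0) := by
  rw [CH_sign_mul hsign]
  by_cases H : h j = h (j - 1) <;> simp [isStart, H]

/-- Number of starts is `n/2`, as an integer identity. -/
lemma CH_card_starts (m : ℕ) (hn : n = 4 * m) (hm : 1 ≤ m)
    (hsign : signRow n h) (hH : hadamardRow n h) :
    (Finset.univ.filter fun j => isStart n h j).card = 2 * m := by
  have h1 : (1 : ZMod n) ≠ 0 := by
    haveI : Fact (1 < n) := ⟨by omega⟩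
    exact one_ne_zero
  have S1 := hH 1 h1
  have : ∑ j : ZMod n, h j * h (j - 1)
      = ∑ j : ZMod n, (1 - 2 * (if isStart n h j then (1 : ℤ) else 0)) :=
    Finset.sum_congr rfl fun j _ => CH_start_indicator hsign j
  rw [this] at S1
  rw [Finset.sum_sub_distrib, ← Finset.mul_sum, Finset.sum_boole, Finset.sum_const] at S1
  simp only [Finset.card_univ, ZMod.card, nsmul_eq_mul, mul_one] at S1
  have : (n : ℤ) = 2 * ((Finset.univ.filter fun j => isStart n h j).card : ℤ) := by linarith
  have := this
  omega

end Helpers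

section Helpers2
set_option linter.unusedSectionVars false
variable {n : ℕ} [NeZero n] {h : ZMod n → ℤ}

/-- Number of `j` with both `j` and `j+1` starts is `m`. -/
lemma CH_card_pairs (m : ℕ) (hn : n = 4 * m) (hm : 1 ≤ m)
    (hsign : signRow n h) (hH : hadamardRow n h) :
    (Finset.univ.filter fun j => isStart n h j ∧ isStart n h (j + 1)).card = m := by
  have h2 : (2 : ZMod n) ≠ 0 := by
    have : ((2 : ℕ) : ZMod n) ≠ 0 := by
      rw [Ne, ZMod.natCast_eq_zero_iff]
      intro hdvd
      have := Nat.le_of_dvd (by norm_num) hdvd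
      omega
    simpa using this
  have S2 := hH 2 h2
  have key : ∀ j : ZMod n, h j * h (j - 2)
      = (1 - 2 * (if isStart n h j then (1 : ℤ) else 0))
        * (1 - 2 * (if isStart n h (j - 1) then (1 : ℤ) else 0)) := by
    intro j
    have e1 : h j * h (j - 2) = (h j * h (j - 1)) * (h (j - 1) * h ((j-1) - 1)) := by
      have hsq : h (j - 1) * h (j - 1) = 1 := by
        rcases hsign (j - 1) with e | e <;> rw [e] <;> norm_num
      have e2 : (j : ZMod n) - 2 = (j - 1) - 1 := by ring
      rw [e2, show (h j * h (j-1)) * (h (j-1) * h ((j-1)-1))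
          = h j * (h (j-1) * h (j-1)) * h ((j-1)-1) by ring, hsq, mul_one]
    rw [e1, CH_start_indicator hsign j, CH_start_indicator hsign (j - 1)]
  have : ∑ j : ZMod n, h j * h (j - 2)
      = ∑ j : ZMod n, ((1 - 2 * (if isStart n h j then (1 : ℤ) else 0))
        * (1 - 2 * (if isStart n h (j - 1) then (1 : ℤ) else 0))) :=
    Finset.sum_congr rfl fun j _ => key j
  rw [this] at S2
  -- expand
  have expand : ∀ j : ZMod n, ((1 - 2 * (if isStart n h j then (1 : ℤ) else 0))
        * (1 - 2 * (if isStart n h (j - 1) then (1 : ℤ) else 0)))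
      = 1 - 2 * (if isStart n h j then (1 : ℤ) else 0)
          - 2 * (if isStart n h (j - 1) then (1 : ℤ) else 0)
          + 4 * (if isStart n h j ∧ isStart n h (j - 1) then (1 : ℤ) else 0) := by
    intro j
    by_cases H1 : isStart n h j <;> by_cases H2 : isStart n h (j - 1) <;>
      simp [H1, H2] <;> ring
  rw [Finset.sum_congr rfl fun j _ => expand j] at S2
  rw [Finset.sum_add_distrib, Finset.sum_sub_distrib, Finset.sum_sub_distrib,
    ← Finset.mul_sum, ← Finset.mul_sum, ← Finset.mul_sum,
    Finset.sum_boole, Finset.sum_boole, Finset.sum_boole, Finset.sum_const] at S2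
  simp only [Finset.card_univ, ZMod.card, nsmul_eq_mul, mul_one] at S2
  -- reindex the shifted indicator count
  have shift1 : (Finset.univ.filter fun j : ZMod n => isStart n h (j - 1)).card
      = (Finset.univ.filter fun j : ZMod n => isStart n h j).card := by
    refine Finset.card_bij' (fun j _ => j - 1) (fun j _ => j + 1) ?_ ?_ ?_ ?_
    · intro a ha; simp only [Finset.mem_filter, Finset.mem_univ, true_and] at ha ⊢; exact ha
    · intro a ha
      simp only [Finset.mem_filter, Finset.mem_univ, true_and] at ha ⊢
      rwa [add_sub_cancel_right]
    · intro a _; exact sub_add_cancel a 1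
    · intro a _; exact add_sub_cancel_right a 1
  have shift2 : (Finset.univ.filter fun j : ZMod n => isStart n h j ∧ isStart n h (j - 1)).card
      = (Finset.univ.filter fun j : ZMod n => isStart n h j ∧ isStart n h (j + 1)).card := by
    refine Finset.card_bij' (fun j _ => j - 1) (fun j _ => j + 1) ?_ ?_ ?_ ?_
    · intro a ha
      simp only [Finset.mem_filter, Finset.mem_univ, true_and] at ha ⊢
      rw [sub_add_cancel]
      exact ⟨ha.2, ha.1⟩
    · intro a ha
      simp only [Finset.mem_filter, Finset.mem_univ, true_and] at ha ⊢
      rw [add_sub_cancel_right]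
      exact ⟨ha.2, ha.1⟩
    · intro a _; exact sub_add_cancel a 1
    · intro a _; exact add_sub_cancel_right a 1
  rw [shift1, shift2, CH_card_starts m hn hm hsign hH] at S2
  have hn' : (n : ℤ) = 4 * m := by exact_mod_cast congrArg (Nat.cast : ℕ → ℤ) hn
  omega

end Helpers2

section Helpers3
set_option linter.unusedSectionVars false
variable {n : ℕ} [NeZero n] {h : ZMod n → ℤ}

lemma CH_exists_ne (hst : ∃ j0, isStart n h j0) (j : ZMod n) : ∃ i, h i ≠ h j := by
  obtain ⟨j0, hj0⟩ := hst
  by_cases H : h j0 = h j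
  · exact ⟨j0 - 1, fun e => hj0 (H.trans e.symm)⟩
  · exact ⟨j0, H⟩

lemma CH_blockSet_nonempty (hst : ∃ j0, isStart n h j0) (j : ZMod n) :
    ∃ k, k ∈ {k : ℕ | 0 < k ∧ h (j + (k : ZMod n)) ≠ h j} ∧ k < n := by
  obtain ⟨i, hi⟩ := CH_exists_ne hst j
  refine ⟨(i - j).val, ⟨?_, ?_⟩, ZMod.val_lt _⟩
  · exact ZMod.val_pos.mpr (fun e => hi (by rw [sub_eq_zero] at e; rw [e]))
  · rw [ZMod.natCast_rightInverse (i - j)]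
    simpa using hi

lemma CH_blockLen_pos (hst : ∃ j0, isStart n h j0) (j : ZMod n) :
    0 < blockLen n h j := by
  obtain ⟨k, hk, _⟩ := CH_blockSet_nonempty hst (h := h) j
  exact (Nat.sInf_mem (Set.nonempty_of_mem hk)).1

lemma CH_blockLen_lt (hst : ∃ j0, isStart n h j0) (j : ZMod n) :
    blockLen n h j < n := by
  obtain ⟨k, hk, hkn⟩ := CH_blockSet_nonempty hst (h := h) j
  exact lt_of_le_of_lt (Nat.sInf_le hk) hkn

lemma CH_blockLen_spec (hst : ∃ j0, isStart n h j0) (j : ZMod n) :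
    h (j + (blockLen n h j : ZMod n)) ≠ h j := by
  obtain ⟨k, hk, _⟩ := CH_blockSet_nonempty hst (h := h) j
  exact (Nat.sInf_mem (Set.nonempty_of_mem hk)).2

lemma CH_blockLen_const (j : ZMod n) {t : ℕ} (ht : t < blockLen n h j) :
    h (j + (t : ZMod n)) = h j := by
  by_contra H
  rcases Nat.eq_zero_or_pos t with rfl | htpos
  · simp at H
  · exact absurd
      (Nat.sInf_le (show t ∈ {k : ℕ | 0 < k ∧ h (j + (k : ZMod n)) ≠ h j} from ⟨htpos, H⟩))
      (not_le.mpr ht)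

lemma CH_two_le_blockLen_iff (hst : ∃ j0, isStart n h j0) (j : ZMod n) :
    2 ≤ blockLen n h j ↔ h (j + 1) = h j := by
  constructor
  · intro hle
    by_contra H
    have : blockLen n h j ≤ 1 := Nat.sInf_le ⟨one_pos, by simpa using H⟩
    omega
  · intro H
    have h1 : blockLen n h j ≠ 1 := by
      intro e
      have := CH_blockLen_spec hst (h := h) j
      rw [e] at this
      simpa [H] using this
    have := CH_blockLen_pos hst (h := h) j
    omega

end Helpers3

section Helpers4
set_option linter.unusedSectionVars false
variable {n : ℕ} [NeZero n] {h : ZMod n → ℤ}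

/-- distance back to the nearest start. -/
noncomputable def CHd (n : ℕ) (h : ZMod n → ℤ) (i : ZMod n) : ℕ :=
  sInf {k : ℕ | isStart n h (i - (k : ZMod n))}

lemma CHd_mem (hst : ∃ j0, isStart n h j0) (i : ZMod n) :
    isStart n h (i - (CHd n h i : ZMod n)) := by
  obtain ⟨j0, hj0⟩ := hst
  have : (i - j0).val ∈ {k : ℕ | isStart n h (i - (k : ZMod n))} := by
    simp only [Set.mem_setOf_eq, ZMod.natCast_rightInverse (i - j0)]
    simpa using hj0
  exact Nat.sInf_mem (Set.nonempty_of_mem this)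

lemma CHd_const (i : ZMod n) : ∀ k, k ≤ CHd n h i → h (i - (k : ZMod n)) = h i := by
  intro k
  induction k with
  | zero => intro _; simp
  | succ k ih =>
    intro hk
    have hlt : k < CHd n h i := by omega
    have hns : ¬ isStart n h (i - (k : ZMod n)) := fun H =>
      absurd (Nat.sInf_le H) (not_le.mpr hlt)
    have : h (i - (k : ZMod n)) = h (i - (k : ZMod n) - 1) := by
      by_contra H; exact hns H
    rw [← ih (le_of_lt hlt), this]
    congr 1
    push_cast
    ring

/-- the start of the block containing `i`. -/
noncomputable def CHg (n : ℕ) (h : ZMod n → ℤ) (i : ZMod n) : ZMod n :=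
  i - (CHd n h i : ZMod n)

lemma CHg_start (hst : ∃ j0, isStart n h j0) (i : ZMod n) :
    isStart n h (CHg n h i) := CHd_mem hst i

lemma CHg_fiber (hst : ∃ j0, isStart n h j0) {j : ZMod n} (hj : isStart n h j) (i : ZMod n) :
    CHg n h i = j ↔ ∃ k, k < blockLen n h j ∧ i = j + (k : ZMod n) := by
  constructor
  · intro hg
    set D := CHd n h i with hD
    have hiD : i = j + (D : ZMod n) := by
      rw [← hg]; unfold CHg; ring
    refine ⟨D, ?_, hiD⟩
    by_contra H
    push_neg at H
    set L := blockLen n h j with hL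
    have hijL : j + (L : ZMod n) = i - ((D - L : ℕ) : ZMod n) := by
      rw [hiD, Nat.cast_sub H]
      ring
    have h1 : h (j + (L : ZMod n)) = h i := by
      rw [hijL]; exact CHd_const i (D - L) (by omega)
    have h2 : h j = h i := by
      have hx := CHd_const (h := h) i D le_rfl
      rw [show i - (D : ZMod n) = CHg n h i from rfl, hg] at hx
      exact hx
    exact CH_blockLen_spec hst j (h1.trans h2.symm)
  · rintro ⟨k, hk, rfl⟩
    have hmem : k ∈ {l : ℕ | isStart n h (j + (k : ZMod n) - (l : ZMod n))} := by
      simp only [Set.mem_setOf_eq, add_sub_cancel_right]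
      exact hj
    have hdk : CHd n h (j + (k : ZMod n)) = k := by
      refine le_antisymm (Nat.sInf_le hmem) ?_
      by_contra H
      push_neg at H
      have hsmem : isStart n h ((j + (k : ZMod n)) - ((CHd n h (j + (k : ZMod n))) : ZMod n)) :=
        CHd_mem hst _
      set l := CHd n h (j + (k : ZMod n)) with hl
      -- l < k, and isStart at j + k - l = j + (k - l)
      have hcast : (j + (k : ZMod n)) - (l : ZMod n) = j + ((k - l : ℕ) : ZMod n) := by
        rw [Nat.cast_sub (le_of_lt H)]
        ring
      rw [hcast] at hsmem
      have ht1 : 0 < k - l := by omega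
      have ht2 : k - l < blockLen n h j := by omega
      have e1 : h (j + ((k - l : ℕ) : ZMod n)) = h j := CH_blockLen_const j ht2
      have e2 : h (j + ((k - l : ℕ) : ZMod n) - 1) = h j := by
        have : (j + ((k - l : ℕ) : ZMod n) - 1) = j + ((k - l - 1 : ℕ) : ZMod n) := by
          rw [Nat.cast_sub (by omega : 1 ≤ k - l)]
          push_cast
          ring
        rw [this]
        exact CH_blockLen_const j (by omega)
      exact hsmem (e1.trans e2.symm)
    unfold CHg
    rw [hdk]
    ring

lemma CHg_fiber_card (hst : ∃ j0, isStart n h j0) {j : ZMod n} (hj : isStart n h j) :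
    (Finset.univ.filter fun i => CHg n h i = j).card = blockLen n h j := by
  have : (Finset.univ.filter fun i => CHg n h i = j)
      = (Finset.range (blockLen n h j)).image (fun k : ℕ => j + (k : ZMod n)) := by
    ext i
    simp only [Finset.mem_filter, Finset.mem_univ, true_and, Finset.mem_image,
      Finset.mem_range, CHg_fiber hst hj]
    constructor
    · rintro ⟨k, hk, rfl⟩; exact ⟨k, hk, rfl⟩
    · rintro ⟨k, hk, rfl⟩; exact ⟨k, hk, rfl⟩
  rw [this, Finset.card_image_of_injOn, Finset.card_range]
  intro a ha b hb e
  simp only [Finset.coe_range, Set.mem_Iio] at ha hb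
  have hL := CH_blockLen_lt hst (h := h) j
  have : ((a : ZMod n)) = (b : ZMod n) := by
    have := congrArg (fun x => x - j) e
    simpa using this
  have := congrArg ZMod.val this
  rwa [ZMod.val_cast_of_lt (by omega), ZMod.val_cast_of_lt (by omega)] at this

/-- total block length over all starts is `n`. -/
lemma CH_sum_blockLen (hst : ∃ j0, isStart n h j0) :
    ∑ j ∈ Finset.univ.filter (fun j : ZMod n => isStart n h j), blockLen n h j = n := by
  have := Finset.card_eq_sum_card_fiberwise
    (f := CHg n h) (s := (Finset.univ : Finset (ZMod n)))
    (t := Finset.univ.filter fun j => isStart n h j)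
    (fun i _ => Finset.mem_filter.mpr ⟨Finset.mem_univ _, CHg_start hst i⟩)
  rw [Finset.card_univ, ZMod.card] at this
  conv_rhs => rw [this]
  apply Finset.sum_congr rfl
  intro j hj
  exact (CHg_fiber_card hst (Finset.mem_filter.mp hj).2).symm

end Helpers4

theorem stmt10 (n m : ℕ) [NeZero n] (h : ZMod n → ℤ)
    (hn : n = 4 * m) (hm : 1 ≤ m)
    (hsign : signRow n h) (hH : hadamardRow n h) :
    (Finset.univ.filter fun j : ZMod n => isStart n h j ∧ 2 ≤ blockLen n h j).card = m ∧
    ∑ j ∈ Finset.univ.filter (fun j : ZMod n => isStart n h j ∧ 2 ≤ blockLen n h j),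
      blockLen n h j = 3 * m := by
  have hcs := CH_card_starts m hn hm hsign hH
  have hcp := CH_card_pairs m hn hm hsign hH
  have hst : ∃ j0, isStart n h j0 := by
    have : (Finset.univ.filter fun j => isStart n h j).Nonempty := by
      rw [← Finset.card_pos, hcs]; omega
    obtain ⟨j0, hj0⟩ := this
    exact ⟨j0, (Finset.mem_filter.mp hj0).2⟩
  -- 2 ≤ blockLen j ↔ ¬ isStart (j+1)
  have key : ∀ j : ZMod n, (2 ≤ blockLen n h j ↔ ¬ isStart n h (j + 1)) := by
    intro j
    rw [CH_two_le_blockLen_iff hst]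
    unfold isStart
    rw [add_sub_cancel_right]
    tauto
  -- the target filter set
  have hseteq : (Finset.univ.filter fun j : ZMod n => isStart n h j ∧ 2 ≤ blockLen n h j)
      = Finset.univ.filter fun j : ZMod n => isStart n h j ∧ ¬ isStart n h (j + 1) := by
    apply Finset.filter_congr
    intro j _
    rw [key j]
  have hsplit : (Finset.univ.filter fun j : ZMod n => isStart n h j ∧ isStart n h (j + 1)).card
      + (Finset.univ.filter fun j : ZMod n => isStart n h j ∧ ¬ isStart n h (j + 1)).card
      = (Finset.univ.filter fun j : ZMod n => isStart n h j).card := by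
    rw [show (Finset.univ.filter fun j : ZMod n => isStart n h j ∧ isStart n h (j + 1))
        = (Finset.univ.filter fun j : ZMod n => isStart n h j).filter
            (fun j => isStart n h (j + 1)) by rw [Finset.filter_filter],
      show (Finset.univ.filter fun j : ZMod n => isStart n h j ∧ ¬ isStart n h (j + 1))
        = (Finset.univ.filter fun j : ZMod n => isStart n h j).filter
            (fun j => ¬ isStart n h (j + 1)) by rw [Finset.filter_filter]]
    exact Finset.card_filter_add_card_filter_not _
  have hcard : (Finset.univ.filter fun j : ZMod n => isStart n h j ∧ 2 ≤ blockLen n h j).card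
      = m := by
    rw [hseteq]; omega
  refine ⟨hcard, ?_⟩
  -- sum part
  have htotal := CH_sum_blockLen (h := h) hst
  have hsum : ∑ j ∈ (Finset.univ.filter fun j : ZMod n => isStart n h j).filter
        (fun j => 2 ≤ blockLen n h j), blockLen n h j
      + ∑ j ∈ (Finset.univ.filter fun j : ZMod n => isStart n h j).filter
        (fun j => ¬ 2 ≤ blockLen n h j), blockLen n h j
      = n := by
    rw [Finset.sum_filter_add_sum_filter_not]; exact htotal
  have hff1 : (Finset.univ.filter fun j : ZMod n => isStart n h j).filter
        (fun j => 2 ≤ blockLen n h j)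
      = Finset.univ.filter fun j : ZMod n => isStart n h j ∧ 2 ≤ blockLen n h j := by
    rw [Finset.filter_filter]
  have hsmall : ∑ j ∈ (Finset.univ.filter fun j : ZMod n => isStart n h j).filter
        (fun j => ¬ 2 ≤ blockLen n h j), blockLen n h j
      = ((Finset.univ.filter fun j : ZMod n => isStart n h j).filter
        (fun j => ¬ 2 ≤ blockLen n h j)).card := by
    rw [Finset.card_eq_sum_ones]
    apply Finset.sum_congr rfl
    intro j hj
    have h2 := (Finset.mem_filter.mp hj).2
    have h1 := CH_blockLen_pos hst (h := h) j
    omega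
  have hsmallcard : ((Finset.univ.filter fun j : ZMod n => isStart n h j).filter
        (fun j => ¬ 2 ≤ blockLen n h j)).card = m := by
    have := Finset.card_filter_add_card_filter_not
      (s := Finset.univ.filter fun j : ZMod n => isStart n h j)
      (p := fun j => 2 ≤ blockLen n h j)
    rw [hff1, hcard, hcs] at this
    omega
  rw [hff1] at hsum
  rw [hsmall, hsmallcard] at hsum
  omega
end

section
/- For n = 4m with all nontrivial circular autocorrelations of h : ZMod n → {1, -1} equal to zero, the number of maximal runs of consecutive 1-blocks equals the number of maximal runs of consecutive blocks of size ≥ 2 (α₁ = α_{≥2}). -/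
open Finset
open scoped Classical

lemma card_shift (n : ℕ) [NeZero n] (Q : ZMod n → Prop) (c : ZMod n) :
    (Finset.univ.filter fun j : ZMod n => Q (j + c)).card =
    (Finset.univ.filter Q).card := by
  classical
  apply Finset.card_bij' (fun j _ => j + c) (fun j _ => j - c)
  · intro a ha
    simp only [Finset.mem_filter, Finset.mem_univ, true_and] at ha ⊢
    exact ha
  · intro a ha
    simp only [Finset.mem_filter, Finset.mem_univ, true_and] at ha ⊢
    simpa using ha
  · intro a _; ring
  · intro a _; ring

theorem stmt13 (n m : ℕ) [NeZero n] (h : ZMod n → ℤ)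
    (hn : n = 4 * m) (hm : 1 ≤ m)
    (hsign : signRow n h) (hH : hadamardRow n h) :
    alpha1 n h =
      (Finset.univ.filter fun j : ZMod n =>
        (h j ≠ h (j - 1) ∧ h j = h (j + 1)) ∧ h (j - 1) ≠ h (j - 2)).card := by
  classical
  set P : ZMod n → Prop := fun j => oneBlock n h j with hP
  -- rewrite RHS set as {j | P (j-1) ∧ ¬ P j}
  have hRHS : (Finset.univ.filter fun j : ZMod n =>
      (h j ≠ h (j - 1) ∧ h j = h (j + 1)) ∧ h (j - 1) ≠ h (j - 2)) =
      (Finset.univ.filter fun j : ZMod n => P (j - 1) ∧ ¬ P j) := by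
    apply Finset.filter_congr
    intro j _
    simp only [hP, oneBlock, sub_add_cancel, sub_sub, one_add_one_eq_two]
    constructor
    · rintro ⟨⟨h1, h2⟩, h3⟩
      refine ⟨⟨h3, fun e => h1 e.symm⟩, ?_⟩
      rintro ⟨_, h5⟩; exact h5 h2
    · rintro ⟨⟨h3, h4⟩, h5⟩
      have h1 : h j ≠ h (j - 1) := fun e => h4 e.symm
      by_cases h2 : h j = h (j + 1)
      · exact ⟨⟨h1, h2⟩, h3⟩
      · exact absurd ⟨h1, h2⟩ h5
  rw [hRHS]
  -- alpha1 counts {j | P j ∧ ¬ P (j-1)}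
  have hL : alpha1 n h = (Finset.univ.filter fun j : ZMod n => P j ∧ ¬ P (j - 1)).card := by
    unfold alpha1
    congr 1
    ext j
    rw [Finset.mem_filter, Finset.mem_filter]
    simp [oneRunStart, hP]
  rw [hL]
  -- shift both sides to express via S = filter P and T = filter (P ∘ (· + 1))
  have e1 : (Finset.univ.filter fun j : ZMod n => P j ∧ ¬ P (j - 1)).card =
      (Finset.univ.filter fun j : ZMod n => P (j + 1) ∧ ¬ P j).card := by
    have := card_shift n (fun j => P j ∧ ¬ P (j - 1)) 1
    simp only [add_sub_cancel_right] at this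
    convert this.symm using 3
  have e2 : (Finset.univ.filter fun j : ZMod n => P (j - 1) ∧ ¬ P j).card =
      (Finset.univ.filter fun j : ZMod n => P j ∧ ¬ P (j + 1)).card := by
    have := card_shift n (fun j => P (j - 1) ∧ ¬ P j) 1
    simp only [add_sub_cancel_right] at this
    convert this.symm using 3
  rw [e1, e2]
  -- now the generic start/end count equality
  have hS : (Finset.univ.filter fun j : ZMod n => P (j + 1)).card =
      (Finset.univ.filter P).card := card_shift n P 1
  have hA : (Finset.univ.filter fun j : ZMod n => P (j + 1) ∧ ¬ P j) =
      (Finset.univ.filter fun j : ZMod n => P (j + 1)) \ (Finset.univ.filter P) := by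
    ext j; simp [and_comm]
  have hB : (Finset.univ.filter fun j : ZMod n => P j ∧ ¬ P (j + 1)) =
      (Finset.univ.filter P) \ (Finset.univ.filter fun j : ZMod n => P (j + 1)) := by
    ext j; simp [and_comm]
  rw [hA, hB]
  exact Finset.card_sdiff_comm hS
end
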